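/- For every m ≥ 0: A_m occurs exactly twice in the word A_m A_m, namely at positions 1 and 2^m + 1 (as prefix and suffix); and A_m occurs exactly twice in the word A_m B_m A_m, namely at positions 1 and 2^{m+1} + 1 (as prefix and suffix). -/

import Mathlib

/-!
Since `A (m + 1) = A m ++ B m` and `B (m + 1) = A m ++ A m`, the words `A m` and `B m` differ
only in their last letter. A window of `A m ++ A m`, or one of `A m ++ B m ++ A m` starting in
the first `A m`, is a rotation of `A m`. If a rotation by `0 < j < 2 ^ m` fixed `A m`, so would
the rotation by `gcd j 2 ^ m`, hence the half-turn; but the half-turn of `A k ++ B k` is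
`B k ++ A k`. Every other window of `A m ++ B m ++ A m` except the last is a rotation of `B m`,
hence a permutation of `B m`, which `A m` is not.
-/

/-- The alphabet: letters a, b (for the period-doubling sequence) and c (used by Θ₂). -/
inductive Letter : Type
  | a | b | c
deriving DecidableEq, Repr

open Letter

/-- The period-doubling substitution σ : a ↦ ab, b ↦ aa, extended to words
(the extra letter c is left untouched; it is never produced). -/
def sigmaw : List Letter → List Letter :=
  fun w => w.flatMap fun x => match x with
    | .a => [.a, .b]
    | .b => [.a, .a]
    | .c => [.c]

/-- A_m = σ^m(a). -/
def A (m : ℕ) : List Letter := sigmaw^[m] [.a]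

/-- B_m = σ^m(b). -/
def B (m : ℕ) : List Letter := sigmaw^[m] [.b]

/-- δ_m, the last letter of A_m. -/
def delta (m : ℕ) : Letter := (A m).getLastD .a

/-- The period-doubling sequence D, as a function giving its (n+1)-st letter
(0-indexed); it is the fixed point of σ beginning with a, and A_{n+1} is a
prefix of it of length 2^{n+1} > n. -/
def D (n : ℕ) : Letter := (A (n + 1)).getD n .a

/-- The finite segment D[i .. i+len−1] of the period-doubling sequence,
with 1-based starting position i. -/
def Dseg (i len : ℕ) : List Letter := (List.range len).map fun k => D (i - 1 + k)

/-- u occurs in the finite word w at (1-based) position i. -/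
def OccursAt {α : Type*} (u w : List α) (i : ℕ) : Prop :=
  1 ≤ i ∧ i - 1 + u.length ≤ w.length ∧ (w.drop (i - 1)).take u.length = u

/-- u is a factor of the finite word w. -/
def IsFactor {α : Type*} (u w : List α) : Prop := ∃ i, OccursAt u w i

/-- u occurs in the period-doubling sequence D at (1-based) position i. -/
def DOccursAt (u : List Letter) (i : ℕ) : Prop := 1 ≤ i ∧ Dseg i u.length = u

/-- u is a factor of the period-doubling sequence D. -/
def FactorD (u : List Letter) : Prop := ∃ i, DOccursAt u i

/-- L(u,p): the starting position of the p-th occurrence (p ≥ 1) of u in D. -/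
noncomputable def L (u : List Letter) (p : ℕ) : ℕ := Nat.nth (DOccursAt u) (p - 1)

/-- r_p(u): the p-th return word of u (p ≥ 1), i.e. D[L(u,p) .. L(u,p+1)−1];
r_0(u) is the prefix of D preceding the first occurrence of u. -/
noncomputable def r (u : List Letter) (p : ℕ) : List Letter :=
  if p = 0 then Dseg 1 (L u 1 - 1) else Dseg (L u p) (L u (p + 1) - L u p)

/-- The morphism τ₁ : a ↦ a, b ↦ bb, extended to words. -/
def tau1 : List Letter → List Letter :=
  fun w => w.flatMap fun x => match x with
    | .a => [.a]
    | .b => [.b, .b]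
    | .c => [.c]

/-- The morphism τ₂ : a ↦ ab, b ↦ acac, extended to words. -/
def tau2 : List Letter → List Letter :=
  fun w => w.flatMap fun x => match x with
    | .a => [.a, .b]
    | .b => [.a, .c, .a, .c]
    | .c => [.c]

/-- Θ₁[p], the p-th letter (p ≥ 1) of Θ₁ = τ₁(D): since |τ₁(w)| ≥ |w|, the p-th
letter of Θ₁ is the p-th letter of the image of the length-p prefix of D. -/
def Theta1 (p : ℕ) : Letter := (tau1 (Dseg 1 p)).getD (p - 1) .a

/-- Θ₂[p], the p-th letter (p ≥ 1) of Θ₂ = τ₂(D). -/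
def Theta2 (p : ℕ) : Letter := (tau2 (Dseg 1 p)).getD (p - 1) .a

/-- The envelope word E_{1,m} = A_m with its last letter δ_m deleted. -/
def E1 (m : ℕ) : List Letter := (A m).dropLast

/-- The envelope word E_{2,m} = B_m B_{m−1} with its last letter δ_m deleted. -/
def E2 (m : ℕ) : List Letter := (B m ++ B (m - 1)).dropLast

/-- Enumeration of the envelope words in the order
E_{1,1} ⊏ E_{2,1} ⊏ E_{1,2} ⊏ E_{2,2} ⊏ …. -/
def Eword (k : ℕ) : List Letter := if k % 2 = 0 then E1 (k / 2 + 1) else E2 (k / 2 + 1)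

/-- Env(u): the ⊏-least envelope word having u as a factor. -/
noncomputable def Env (u : List Letter) : List Letter :=
  Eword (sInf {k | IsFactor u (Eword k)})

/-- The letterwise complement exchanging a and b. -/
def comp : Letter → Letter
  | .a => .b
  | .b => .a
  | .c => .c

open Function

namespace List

variable {α : Type*}

theorem rotate_one_iterate (l : List α) (n : ℕ) : (rotate · 1)^[n] l = l.rotate n := by
  induction n with
  | zero => exact (rotate_zero l).symm
  | succ n ih => rw [iterate_succ_apply', ih, rotate_rotate]

theorem isPeriodicPt_rotate_one_iff {l : List α} {n : ℕ} :
    IsPeriodicPt (rotate · 1) n l ↔ l.rotate n = l := by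
  rw [IsPeriodicPt, IsFixedPt, rotate_one_iterate]

theorem rotate_eq_self_of_gcd_dvd {l : List α} {n k : ℕ} (h : l.rotate n = l)
    (hk : n.gcd l.length ∣ k) : l.rotate k = l := by
  have hgcd := (isPeriodicPt_rotate_one_iff.2 h).gcd
    (isPeriodicPt_rotate_one_iff.2 l.rotate_length)
  obtain ⟨c, rfl⟩ := hk
  exact isPeriodicPt_rotate_one_iff.1 (hgcd.mul_const c)

theorem rotate_two_pow_eq_self {l : List α} {k n : ℕ} (hl : l.length = 2 ^ (k + 1))
    (hn0 : 0 < n) (hn : n < 2 ^ (k + 1)) (h : l.rotate n = l) : l.rotate (2 ^ k) = l := by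
  refine rotate_eq_self_of_gcd_dvd h ?_
  rw [hl]
  -- `gcd n 2 ^ (k + 1)` is a power of two not exceeding `n < 2 ^ (k + 1)`.
  obtain ⟨i, -, hi⟩ := (Nat.dvd_prime_pow Nat.prime_two).1 (Nat.gcd_dvd_right n _)
  have hlt : 2 ^ i < 2 ^ (k + 1) := hi ▸ (Nat.le_of_dvd hn0 (Nat.gcd_dvd_left _ _)).trans_lt hn
  have hik : i < k + 1 := (Nat.pow_lt_pow_iff_right (by norm_num)).1 hlt
  rw [hi]
  exact Nat.pow_dvd_pow 2 (Nat.lt_succ_iff.1 hik)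

theorem take_drop_append_eq_rotate {x y : List α} {j : ℕ} (hj : j ≤ x.length)
    (hxy : y.take j = x.take j) : ((x ++ y).drop j).take x.length = x.rotate j := by
  rw [drop_append_of_le_length hj, take_append, take_of_length_le (by simp),
    length_drop, Nat.sub_sub_self hj, hxy, rotate_eq_drop_append_take hj]

end List

open List

theorem occursAt_zero {α : Type*} {u w : List α} : ¬OccursAt u w 0 :=
  fun h => absurd h.1 (by decide)

theorem occursAt_succ_iff {α : Type*} {u w : List α} {j : ℕ} :
    OccursAt u w (j + 1) ↔ j + u.length ≤ w.length ∧ (w.drop j).take u.length = u := by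
  simp [OccursAt]

theorem sigmaw_append (x y : List Letter) : sigmaw (x ++ y) = sigmaw x ++ sigmaw y := by
  simp [sigmaw]

theorem sigmaw_iterate_append (m : ℕ) (x y : List Letter) :
    sigmaw^[m] (x ++ y) = sigmaw^[m] x ++ sigmaw^[m] y := by
  induction m generalizing x y with
  | zero => rfl
  | succ k ih => simp only [iterate_succ_apply, sigmaw_append, ih]

theorem A_succ (m : ℕ) : A (m + 1) = A m ++ B m :=
  sigmaw_iterate_append m [.a] [.b]

theorem B_succ (m : ℕ) : B (m + 1) = A m ++ A m :=
  sigmaw_iterate_append m [.a] [.a]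

theorem exists_A_eq_B_eq (m : ℕ) :
    ∃ w x y, x ≠ y ∧ A m = w ++ [x] ∧ B m = w ++ [y] := by
  induction m with
  | zero => exact ⟨[], .a, .b, by decide, rfl, rfl⟩
  | succ k ih =>
    obtain ⟨w, x, y, hxy, hA, hB⟩ := ih
    exact ⟨A k ++ w, y, x, hxy.symm, by rw [A_succ, append_assoc, ← hB],
      by rw [B_succ, append_assoc, ← hA]⟩

theorem length_B_eq_length_A (m : ℕ) : (B m).length = (A m).length := by
  obtain ⟨w, x, y, -, hA, hB⟩ := exists_A_eq_B_eq m
  simp [hA, hB]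

theorem length_A (m : ℕ) : (A m).length = 2 ^ m := by
  induction m with
  | zero => rfl
  | succ k ih => rw [A_succ, length_append, length_B_eq_length_A, ih, pow_succ, mul_two]

theorem length_B (m : ℕ) : (B m).length = 2 ^ m := by
  rw [length_B_eq_length_A, length_A]

theorem not_perm_A_B (m : ℕ) : ¬A m ~ B m := by
  obtain ⟨w, x, y, hxy, hA, hB⟩ := exists_A_eq_B_eq m
  rw [hA, hB, perm_append_left_iff, singleton_perm_singleton]
  exact hxy

theorem take_B_eq_take_A {m j : ℕ} (hj : j < 2 ^ m) : (B m).take j = (A m).take j := by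
  obtain ⟨w, x, y, -, hA, hB⟩ := exists_A_eq_B_eq m
  have hw : j ≤ w.length := by
    have := length_A m
    rw [hA, length_append, length_singleton] at this
    omega
  rw [hA, hB, take_append_of_le_length hw, take_append_of_le_length hw]

theorem B_rotate_ne_A (m j : ℕ) : (B m).rotate j ≠ A m :=
  fun h => not_perm_A_B m (h ▸ rotate_perm _ _)

theorem A_rotate_eq_self_iff {m j : ℕ} (hj : j ≤ 2 ^ m) :
    (A m).rotate j = A m ↔ j = 0 ∨ j = 2 ^ m := by
  refine ⟨fun h => ?_, ?_⟩
  · by_contra hne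
    obtain _ | k := m
    · omega
    have hhalf := rotate_two_pow_eq_self (length_A _) (by omega) (by omega) h
    rw [A_succ, ← length_A k, rotate_append_length_eq] at hhalf
    have hBA := (append_inj hhalf (length_B_eq_length_A k)).1
    exact B_rotate_ne_A k 0 (by rwa [rotate_zero])
  · rintro (rfl | rfl)
    · exact rotate_zero _
    · rw [← length_A m, rotate_length]

theorem occursAt_A_AA_iff {m j : ℕ} :
    OccursAt (A m) (A m ++ A m) (j + 1) ↔ j = 0 ∨ j = 2 ^ m := by
  rw [occursAt_succ_iff, length_append]
  have hA := length_A m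
  by_cases hj : j ≤ (A m).length
  · rw [take_drop_append_eq_rotate hj rfl, A_rotate_eq_self_iff (hA ▸ hj)]
    omega
  · omega

theorem occursAt_A_ABA_iff {m j : ℕ} :
    OccursAt (A m) (A m ++ B m ++ A m) (j + 1) ↔ j = 0 ∨ j = 2 * 2 ^ m := by
  rw [occursAt_succ_iff, append_assoc, length_append, length_append]
  have hA := length_A m
  have hB := length_B m
  rcases lt_or_ge j (A m).length with hj | hj
  · have hBA_take : (B m ++ A m).take j = (A m).take j := by
      rw [take_append_of_le_length (by omega), take_B_eq_take_A (by omega)]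
    rw [take_drop_append_eq_rotate hj.le hBA_take, A_rotate_eq_self_iff (by omega)]
    omega
  obtain ⟨j, rfl⟩ := Nat.exists_eq_add_of_le hj
  rw [drop_length_add_append]
  rcases lt_trichotomy j (B m).length with hj' | hj' | hj'
  · rw [← length_B_eq_length_A,
      take_drop_append_eq_rotate hj'.le (take_B_eq_take_A (by omega)).symm]
    simp only [B_rotate_ne_A, and_false, false_iff]
    omega
  · simp only [drop_left' hj'.symm, take_length, and_true]
    omega
  · omega

/-- For every m ≥ 0, A_m occurs exactly twice in A_m A_m, at positions 1
and 2^m + 1, and exactly twice in A_m B_m A_m, at positions 1 and 2^{m+1} + 1. -/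
theorem Am_occurrences (m : ℕ) :
    (∀ i, OccursAt (A m) (A m ++ A m) i ↔ i = 1 ∨ i = 2 ^ m + 1) ∧
    (∀ i, OccursAt (A m) (A m ++ B m ++ A m) i ↔ i = 1 ∨ i = 2 ^ (m + 1) + 1) := by
  refine ⟨fun i => ?_, fun i => ?_⟩ <;> rcases i with _ | j
  · simp [occursAt_zero]
  · rw [occursAt_A_AA_iff]
    omega
  · simp [occursAt_zero]
  · rw [occursAt_A_ABA_iff, pow_succ]
    omega
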